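/- arXiv:2403.05339 — 11 statements merged into one kernel-verified Lean document; each statement's English description precedes it below -/
import Mathlib

section
/- Let (A,·) be a commutative associative algebra over a field K, R : A → A an algebra endomorphism (multiplicative linear map), and D : A → A a twisted derivation with respect to R. Define the bilinear map [x,y]_R := x·D(y) − R(y)·D(x) for x,y ∈ A. Then (A, [·,·]_R) is a left-Alia algebra, i.e. [[x,y]_R,z]_R + [[y,z]_R,x]_R + [[z,x]_R,y]_R = [[y,x]_R,z]_R + [[z,y]_R,x]_R + [[x,z]_R,y]_R for all x,y,z ∈ A. -/
/-- The symmetric Jacobi identity defining left-Alia algebras. -/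
def SymJacobi {A : Type*} [Add A] (br : A → A → A) : Prop :=
  ∀ x y z : A,
    br (br x y) z + br (br y z) x + br (br z x) y
      = br (br y x) z + br (br z y) x + br (br x z) y

/-- Let `(A,·)` be a commutative associative algebra over a field `K`,
`R` an algebra endomorphism (multiplicative linear map) and `D` a twisted derivation
with respect to `R`.  Then `[x,y]_R := x·D(y) − R(y)·D(x)` makes `A` a left-Alia algebra. -/
theorem leftAlia_of_twisted_derivation {K A : Type*} [Field K] [CommRing A] [Algebra K A]
    (R D : A →ₗ[K] A)
    (hR : ∀ x y : A, R (x * y) = R x * R y)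
    (hD : ∀ f g : A, D (f * g) = D f * g + R f * D g) :
    SymJacobi (fun x y : A => x * D y - R y * D x) := by
  
  have hS : ∀ f g : A, D f * g + R f * D g = D g * f + R g * D f := by
    intro f g
    rw [← hD, ← hD, mul_comm]
  have hDS : ∀ f g : A,
      D (D f) * g + R (D f) * D g + (D (R f) * D g + R (R f) * D (D g))
        = D (D g) * f + R (D g) * D f + (D (R g) * D f + R (R g) * D (D f)) := by
    intro f g
    have h := congrArg D (hS f g)
    simpa only [map_add, hD] using h
  intro x y z
  simp only [map_sub, hR, hD, map_mul]
  linear_combination (-(R (D z))) * hS x y + (R (D y)) * hS x z + z * hS x (D y)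
    - y * hS x (D z) - (R (D x)) * hS y z - z * hS y (D x) + x * hS y (D z)
    + y * hS z (D x) - x * hS z (D y) - (R z) * hDS x y + (R y) * hDS x z
    - (R x) * hDS y z
end

section
/- Let (A,·) be a commutative associative algebra over a field K and f, g : A → A linear maps. Define the bilinear map [x,y] := x·f(y) + g(x·y) for x,y ∈ A. Then (A, [·,·]) is a left-Alia algebra, i.e. it satisfies the symmetric Jacobi identity [[x,y],z] + [[y,z],x] + [[z,x],y] = [[y,x],z] + [[z,y],x] + [[x,z],y] for all x,y,z ∈ A. -/
/-- Let `(A,·)` be a commutative associative algebra over a field `K`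
and `f, g : A → A` linear maps.  Then `[x,y] := x·f(y) + g(x·y)` makes `A` a
left-Alia algebra (the special left-Alia algebra w.r.t. `(A,·,f,g)`). -/
theorem special_leftAlia {K A : Type*} [Field K] [CommRing A] [Algebra K A]
    (f g : A →ₗ[K] A) :
    SymJacobi (fun x y : A => x * f y + g (x * y)) := by
  intro x y z
  simp only [add_mul, mul_add, map_add]
  ring_nf
end

section
/- Let A be a two-dimensional vector space over the complex field ℂ. Then for any bilinear map [·,·] : A × A → A, the pair (A, [·,·]) is a left-Alia algebra, i.e. the symmetric Jacobi identity [[x,y],z] + [[y,z],x] + [[z,x],y] = [[y,x],z] + [[z,y],x] + [[x,z],y] holds for all x,y,z ∈ A. -/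
/-- Every bilinear map on a two-dimensional complex vector space
makes it a left-Alia algebra. -/
theorem leftAlia_of_two_dim {A : Type*} [AddCommGroup A] [Module ℂ A]
    (h2 : Module.finrank ℂ A = 2)
    (br : A →ₗ[ℂ] A →ₗ[ℂ] A) :
    SymJacobi (fun x y : A => br x y) := by
  have hfd : FiniteDimensional ℂ A := FiniteDimensional.of_finrank_pos (by omega)
  let b : Module.Basis (Fin 2) ℂ A := Module.finBasisOfFinrankEq ℂ A h2
  intro x y z
  have hx : x = b.repr x 0 • b 0 + b.repr x 1 • b 1 := by
    conv_lhs => rw [← b.sum_repr x]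
    simp only [Fin.sum_univ_two]
  have hy : y = b.repr y 0 • b 0 + b.repr y 1 • b 1 := by
    conv_lhs => rw [← b.sum_repr y]
    simp only [Fin.sum_univ_two]
  have hz : z = b.repr z 0 • b 0 + b.repr z 1 • b 1 := by
    conv_lhs => rw [← b.sum_repr z]
    simp only [Fin.sum_univ_two]
  rw [hx, hy, hz]
  simp only [map_add, map_smul, LinearMap.add_apply, LinearMap.smul_apply]
  module
end

section
/- Let (A,·) be a commutative associative algebra over a field K of characteristic zero, R : A → A an algebra endomorphism, and D : A → A a twisted derivation with respect to R. Define [x,y]_R := x·D(y) − R(y)·D(x) and the trilinear map [x,y,z]_R := (1/2)[[x,y]_R − [y,x]_R, z]_R. Then [x,x,y]_R = 0 and [x,y,z]_R + [y,z,x]_R + [z,x,y]_R = 0 for all x,y,z ∈ A; consequently, if in addition [a,b,[x,y,z]_R]_R = [[a,b,x]_R,y,z]_R + [x,[a,b,y]_R,z]_R + [x,y,[a,b,z]_R]_R holds for all a,b,x,y,z ∈ A, then (A, [·,·,·]_R) is a Lie triple system. -/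
/-- The bracket `[x,y]_R = x·D(y) − R(y)·D(x)` induced by a twisted derivation. -/
def aliaBracket {K A : Type*} [Field K] [CommRing A] [Algebra K A]
    (R D : A →ₗ[K] A) (x y : A) : A :=
  x * D y - R y * D x

/-- The trilinear map `[x,y,z]_R = (1/2)·[[x,y]_R − [y,x]_R, z]_R`. -/
def aliaTriple {K A : Type*} [Field K] [CommRing A] [Algebra K A]
    (R D : A →ₗ[K] A) (x y z : A) : A :=
  (2 : K)⁻¹ • aliaBracket R D (aliaBracket R D x y - aliaBracket R D y x) z

/-- For a commutative associative algebra `A` over a field `K` of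
characteristic zero, an algebra endomorphism `R`, and a twisted derivation `D`
with respect to `R`, the trilinear map `[x,y,z]_R = (1/2)[[x,y]_R − [y,x]_R, z]_R`
satisfies `[x,x,y]_R = 0` and the cyclic identity; consequently, if the fundamental
identity also holds, then `(A,[·,·,·]_R)` is a Lie triple system. -/
theorem lieTripleSystem_of_twisted_derivation {K A : Type*} [Field K] [CharZero K]
    [CommRing A] [Algebra K A]
    (R D : A →ₗ[K] A)
    (hR : ∀ x y : A, R (x * y) = R x * R y)
    (hD : ∀ f g : A, D (f * g) = D f * g + R f * D g) :
    (∀ x y : A, aliaTriple R D x x y = 0) ∧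
    (∀ x y z : A, aliaTriple R D x y z + aliaTriple R D y z x + aliaTriple R D z x y = 0) ∧
    ((∀ a b x y z : A,
        aliaTriple R D a b (aliaTriple R D x y z)
          = aliaTriple R D (aliaTriple R D a b x) y z
            + aliaTriple R D x (aliaTriple R D a b y) z
            + aliaTriple R D x y (aliaTriple R D a b z)) →
      ((∀ x y : A, aliaTriple R D x x y = 0) ∧
       (∀ x y z : A,
          aliaTriple R D x y z + aliaTriple R D y z x + aliaTriple R D z x y = 0) ∧
       (∀ a b x y z : A,
          aliaTriple R D a b (aliaTriple R D x y z)
            = aliaTriple R D (aliaTriple R D a b x) y z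
              + aliaTriple R D x (aliaTriple R D a b y) z
              + aliaTriple R D x y (aliaTriple R D a b z)))) := by
  -- Key identity from commutativity: (g − Rg)·Df = (f − Rf)·Dg.
  have key : ∀ f g : A, (g - R g) * D f = (f - R f) * D g := by
    intro f g
    linear_combination hD g f - hD f g + congrArg D (mul_comm f g)
  -- Apply D to the key identity and expand with hD.
  have key2 : ∀ f g : A,
      (D g - D (R g)) * D f + (R g - R (R g)) * D (D f)
        = (D f - D (R f)) * D g + (R f - R (R f)) * D (D g) := by
    intro f g
    have h := congrArg D (key f g)
    rw [hD, hD] at h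
    simp only [map_sub] at h
    linear_combination h
  -- Expansion of D applied to the antisymmetrized bracket.
  have hS : ∀ a b : A,
      D (a * D b - R b * D a - (b * D a - R a * D b))
        = (D a * D b + R a * D (D b)) - (D (R b) * D a + R (R b) * D (D a))
          - ((D b * D a + R b * D (D a)) - (D (R a) * D b + R (R a) * D (D b))) := by
    intro a b
    rw [map_sub, map_sub, map_sub, hD, hD, hD, hD]
  have part1 : ∀ x y : A, aliaTriple R D x x y = 0 := by
    intro x y
    simp [aliaTriple, aliaBracket]
  have part2 : ∀ x y z : A,
      aliaTriple R D x y z + aliaTriple R D y z x + aliaTriple R D z x y = 0 := by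
    intro x y z
    have h0 : aliaBracket R D (aliaBracket R D x y - aliaBracket R D y x) z
        + aliaBracket R D (aliaBracket R D y z - aliaBracket R D z y) x
        + aliaBracket R D (aliaBracket R D z x - aliaBracket R D x z) y = 0 := by
      simp only [aliaBracket]
      linear_combination (-(R z)) * hS x y + (-(R x)) * hS y z + (-(R y)) * hS z x
        + (-(R z)) * key2 x y + (R y) * key2 x z + (-(R x)) * key2 y z
    simp only [aliaTriple]
    rw [← smul_add, ← smul_add, h0, smul_zero]
  exact ⟨part1, part2, fun h => ⟨part1, part2, h⟩⟩
end

section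
/- Let (g, [·,·]) be a Lie algebra over a field K and (ρ, V) a representation of g, i.e. ρ : g → End(V) is linear with ρ([x,y]) = ρ(x)ρ(y) − ρ(y)ρ(x). Then both (ρ, −ρ, V) and (ρ, 2ρ, V) are representations of (g, [·,·]) regarded as a left-Alia algebra, i.e. with (l,r) = (ρ,−ρ) and with (l,r) = (ρ,2ρ) one has l([x,y])v − l([y,x])v = r(x)r(y)v − r(y)r(x)v + r(y)l(x)v − r(x)l(y)v for all x,y ∈ g, v ∈ V. -/
/-- Let `(g,[·,·])` be a Lie algebra over a field `K` and `(ρ, V)` a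
representation of `g`.  Then both `(ρ, −ρ, V)` and `(ρ, 2ρ, V)` are representations
of `g` regarded as a left-Alia algebra, i.e. with `(l,r)` either of these pairs,
`l([x,y])v − l([y,x])v = r(x)r(y)v − r(y)r(x)v + r(y)l(x)v − r(x)l(y)v`. -/
theorem lie_rep_gives_leftAlia_reps {K L V : Type*} [Field K] [LieRing L] [LieAlgebra K L]
    [AddCommGroup V] [Module K V]
    (ρ : L →ₗ[K] Module.End K V)
    (hρ : ∀ x y : L, ρ ⁅x, y⁆ = ρ x * ρ y - ρ y * ρ x) :
    (∀ (x y : L) (v : V),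
        ρ ⁅x, y⁆ v - ρ ⁅y, x⁆ v
          = (-ρ x) ((-ρ y) v) - (-ρ y) ((-ρ x) v)
            + (-ρ y) (ρ x v) - (-ρ x) (ρ y v)) ∧
    (∀ (x y : L) (v : V),
        ρ ⁅x, y⁆ v - ρ ⁅y, x⁆ v
          = ((2 : K) • ρ x) (((2 : K) • ρ y) v) - ((2 : K) • ρ y) (((2 : K) • ρ x) v)
            + ((2 : K) • ρ y) (ρ x v) - ((2 : K) • ρ x) (ρ y v)) := by
  constructor <;> intro x y v <;>
    have h1 := congrFun (congrArg DFunLike.coe (hρ x y)) v <;>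
    have h2 := congrFun (congrArg DFunLike.coe (hρ y x)) v <;>
    simp only [Module.End.mul_apply, LinearMap.sub_apply, LinearMap.neg_apply,
      LinearMap.smul_apply, LinearMap.map_neg, LinearMap.map_smul] at * <;>
    rw [h1, h2] <;> module
end

section
/- Let (A, [·,·]) be a left-Alia algebra over a field K, V a vector space, and l, r : A → End(V) linear maps. Then (l, r, V) is a representation of (A, [·,·]) if and only if the bilinear map on the direct sum A ⊕ V defined by [x+u, y+v]_d = [x,y] + l(x)v + r(y)u (for x,y ∈ A, u,v ∈ V) makes (A ⊕ V, [·,·]_d) a left-Alia algebra. -/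
/-- The condition for `(l, r, V)` to be a representation of a left-Alia algebra. -/
def IsAliaRep {K A V : Type*} [Field K] [AddCommGroup A] [Module K A]
    [AddCommGroup V] [Module K V]
    (br : A → A → A) (l r : A → Module.End K V) : Prop :=
  ∀ (x y : A) (v : V),
    l (br x y) v - l (br y x) v
      = r x (r y v) - r y (r x v) + r y (l x v) - r x (l y v)

/-- Let `(A,[·,·])` be a left-Alia algebra, `V` a vector space and
`l, r : A → End(V)` linear maps.  Then `(l,r,V)` is a representation of `(A,[·,·])`
iff the semi-direct product bracket `[x+u, y+v] = [x,y] + l(x)v + r(y)u` makes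
`A ⊕ V` a left-Alia algebra. -/
theorem aliaRep_iff_semidirect {K A V : Type*} [Field K] [AddCommGroup A] [Module K A]
    [AddCommGroup V] [Module K V]
    (br : A →ₗ[K] A →ₗ[K] A) (hA : SymJacobi (fun x y : A => br x y))
    (l r : A →ₗ[K] Module.End K V) :
    IsAliaRep (fun x y : A => br x y) (fun x => l x) (fun x => r x) ↔
      SymJacobi (fun p q : A × V => (br p.1 q.1, l p.1 q.2 + r q.1 p.2)) := by
  constructor
  · intro h p q s
    obtain ⟨x, u⟩ := p
    obtain ⟨y, v⟩ := q
    obtain ⟨z, w⟩ := s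
    refine Prod.ext (hA x y z) ?_
    have h1 := h x y w
    have h2 := h y z u
    have h3 := h z x v
    simp only [map_add, Prod.snd_add, Prod.fst_add] at *
    linear_combination (norm := abel) h1 + h2 + h3
  · intro h x y v
    have := congrArg Prod.snd (h (x, 0) (y, 0) (0, v))
    simp only [map_zero, LinearMap.zero_apply, map_add, Prod.snd_add,
      zero_add, add_zero] at this
    linear_combination (norm := abel) this
end

section
/- Let (l, r, V) be a representation of a left-Alia algebra (A, [·,·]) over a field K, with V finite-dimensional. Let l*, r* : A → End(V*) be defined by ⟨l*(x)u*, v⟩ = −⟨u*, l(x)v⟩ and ⟨r*(x)u*, v⟩ = −⟨u*, r(x)v⟩ for x ∈ A, u* ∈ V*, v ∈ V. Then (l*, l* − r*, V*) is also a representation of (A, [·,·]). In particular, (L*, L* − R*, A*) is a representation of (A,[·,·]), where L(x)y = [x,y] = R(y)x (the coadjoint representation). -/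

private lemma dual_rep_aux {K A V : Type*} [Field K] [AddCommGroup A] [Module K A]
    [AddCommGroup V] [Module K V]
    (br : A →ₗ[K] A →ₗ[K] A)
    (l r : A →ₗ[K] Module.End K V)
    (hrep : IsAliaRep (fun x y : A => br x y) (fun x => l x) (fun x => r x)) :
    IsAliaRep (fun x y : A => br x y)
      (fun x => -(l x).dualMap)
      (fun x => -(l x).dualMap - -(r x).dualMap) := by
  intro x y u
  ext v
  have h := congrArg u (hrep x y v)
  simp only [map_sub, map_add] at h
  simp only [LinearMap.sub_apply, LinearMap.neg_apply, LinearMap.dualMap_apply,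
    LinearMap.add_apply, map_sub, map_add, map_neg]
  linear_combination -h

/-- If `(l, r, V)` is a representation of a left-Alia algebra `(A,[·,·])`
with `V` finite-dimensional, then `(l*, l* − r*, V*)` is also a representation, where
`⟨l*(x)u*, v⟩ = −⟨u*, l(x)v⟩`.  In particular `(L*, L* − R*, A*)` is a representation
(the coadjoint representation), where `L(x)y = [x,y] = R(y)x`. -/
theorem dual_aliaRep {K A V : Type*} [Field K] [AddCommGroup A] [Module K A]
    [FiniteDimensional K A] [AddCommGroup V] [Module K V] [FiniteDimensional K V]
    (br : A →ₗ[K] A →ₗ[K] A) (hA : SymJacobi (fun x y : A => br x y))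
    (l r : A →ₗ[K] Module.End K V)
    (hrep : IsAliaRep (fun x y : A => br x y) (fun x => l x) (fun x => r x)) :
    IsAliaRep (fun x y : A => br x y)
      (fun x => -(l x).dualMap)
      (fun x => -(l x).dualMap - -(r x).dualMap) ∧
    IsAliaRep (fun x y : A => br x y)
      (fun x => -(br x).dualMap)
      (fun x => -(br x).dualMap - -(br.flip x).dualMap) := by
  constructor
  · exact dual_rep_aux br l r hrep
  · apply dual_rep_aux br
    intro x y v
    have h := hA x y v
    simp only [LinearMap.flip_apply]
    linear_combination (norm := module) h
end

section
/- Let (A, [·,·], B) be a finite-dimensional quadratic left-Alia algebra over a field K. Then the adjoint representation (L, R, A), where L(x)y = [x,y] = R(y)x, and the coadjoint representation (L*, L* − R*, A*) are equivalent as representations of (A, [·,·]); an intertwining linear isomorphism is B^♮ : A → A* defined by ⟨B^♮(x), y⟩ = B(x,y), i.e. B^♮(L(x)y) = L*(x)B^♮(y) and B^♮(R(x)y) = (L* − R*)(x)B^♮(y) for all x,y ∈ A. -/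
/-- For a finite-dimensional quadratic left-Alia algebra `(A,[·,·],B)`,
the adjoint representation `(L, R, A)` and the coadjoint representation
`(L*, L* − R*, A*)` are equivalent, with intertwiner `B^♮ : A → A*`,
`⟨B^♮(x), y⟩ = B(x,y)`: the map `B^♮` is a linear isomorphism satisfying
`B^♮(L(x)y) = L*(x)B^♮(y)` and `B^♮(R(x)y) = (L* − R*)(x)B^♮(y)`. -/
theorem quadratic_adjoint_equiv_coadjoint {K A : Type*} [Field K]
    [AddCommGroup A] [Module K A] [FiniteDimensional K A]
    (br : A →ₗ[K] A →ₗ[K] A) (hA : SymJacobi (fun x y : A => br x y))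
    (B : A →ₗ[K] A →ₗ[K] K)
    (hsymm : ∀ x y : A, B x y = B y x)
    (hnondeg : ∀ x : A, (∀ y : A, B x y = 0) → x = 0)
    (hinv : ∀ x y z : A, B (br x y) z = B x (br z y - br y z)) :
    Function.Bijective (fun x : A => (B x : Module.Dual K A)) ∧
    (∀ x y : A, B (br x y) = (-(br x).dualMap) (B y)) ∧
    (∀ x y : A, B (br.flip x y) = (-(br x).dualMap - -(br.flip x).dualMap) (B y)) := by
  refine ⟨?_, ?_, ?_⟩
  · have hinj : Function.Injective (fun x : A => (B x : Module.Dual K A)) := by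
      intro x y h
      have : B (x - y) = 0 := by
        simp only [map_sub]
        simpa using sub_eq_zero.mpr h
      have := hnondeg (x - y) (fun z => by rw [this]; rfl)
      exact sub_eq_zero.mp this
    have hB : Function.Injective (B : A →ₗ[K] Module.Dual K A) := hinj
    refine ⟨hinj, ?_⟩
    have hfin : Module.finrank K (Module.Dual K A) = Module.finrank K A :=
      Subspace.dual_finrank_eq
    have := (LinearMap.injective_iff_surjective_of_finrank_eq_finrank
      hfin.symm).mp hB
    exact this
  · intro x y
    ext z
    simp only [LinearMap.neg_apply, LinearMap.dualMap_apply]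
    rw [hinv x y z, hsymm y (br x z), hinv x z y]
    simp only [map_sub]
    abel
  · intro x y
    ext z
    simp only [LinearMap.flip_apply, LinearMap.sub_apply, LinearMap.neg_apply,
      LinearMap.dualMap_apply]
    rw [hinv y x z]
    simp [hsymm]
    abel
end

section
/- Let (A,·) be a commutative associative algebra over a field K with a nondegenerate symmetric bilinear form B that is invariant, i.e. B(x·y, z) = B(x, y·z) for all x,y,z ∈ A. Let f : A → A be a linear map and f̂ : A → A its adjoint with respect to B, i.e. B(f̂(x), y) = B(x, f(y)) for all x,y ∈ A. Define [x,y] := x·f(y) − f̂(x·y). Then (A, [·,·], B) is a quadratic left-Alia algebra: [·,·] satisfies the symmetric Jacobi identity and B([x,y],z) = B(x, [z,y] − [y,z]) for all x,y,z ∈ A. -/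
/-- Let `(A,·)` be a commutative associative algebra with a nondegenerate
symmetric invariant bilinear form `B`, `f` a linear map and `f̂` its adjoint w.r.t. `B`.
Then `[x,y] := x·f(y) − f̂(x·y)` makes `(A,[·,·],B)` a quadratic left-Alia algebra:
the symmetric Jacobi identity holds and `B([x,y],z) = B(x,[z,y]−[y,z])`. -/
theorem quadratic_leftAlia_of_adjoint {K A : Type*} [Field K] [CommRing A] [Algebra K A]
    (B : A →ₗ[K] A →ₗ[K] K)
    (hsymm : ∀ x y : A, B x y = B y x)
    (hnondeg : ∀ x : A, (∀ y : A, B x y = 0) → x = 0)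
    (hBinv : ∀ x y z : A, B (x * y) z = B x (y * z))
    (f fhat : A →ₗ[K] A)
    (hadj : ∀ x y : A, B (fhat x) y = B x (f y)) :
    SymJacobi (fun x y : A => x * f y - fhat (x * y)) ∧
    (∀ x y z : A,
        B (x * f y - fhat (x * y)) z
          = B x ((z * f y - fhat (z * y)) - (y * f z - fhat (y * z)))) := by
  constructor
  · intro x y z
    simp only [map_sub, sub_mul, mul_sub]
    ring_nf
  · intro x y z
    have h1 : B (x * f y) z = B x (z * f y) := by rw [hBinv, mul_comm]
    have h2 : (B (fhat (x * y))) z = B x (y * f z) := by rw [hadj, hBinv]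
    simp only [map_sub, LinearMap.sub_apply, h1, h2, mul_comm z y]
    abel
end

section
/- Let (A, [·,·]) be a finite-dimensional left-Alia algebra over a field K, with L(x)y = [x,y] = R(y)x, and consider the semi-direct product left-Alia algebra structure on d = A ⊕ A* given by [x + a*, y + b*]_d = [x,y] + L*(x)b* + (L* − R*)(y)a*. Define the bilinear form B_d on A ⊕ A* by B_d(x + a*, y + b*) = ⟨x, b*⟩ + ⟨a*, y⟩. Then (A ⊕ A*, [·,·]_d, B_d) is a quadratic left-Alia algebra; in particular B_d([u,v]_d, w) = B_d(u, [w,v]_d − [v,w]_d) for all u,v,w ∈ A ⊕ A*. -/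
/-- The semi-direct product bracket on `A ⊕ A*` coming from the coadjoint
representation `(L*, L* − R*, A*)`:
`[x + a*, y + b*] = [x,y] + L*(x)b* + (L* − R*)(y)a*`. -/
def coadjBracket {K A : Type*} [Field K] [AddCommGroup A] [Module K A]
    (br : A →ₗ[K] A →ₗ[K] A)
    (p q : A × Module.Dual K A) : A × Module.Dual K A :=
  (br p.1 q.1,
    (-(br p.1).dualMap) q.2 + (-(br q.1).dualMap - -(br.flip q.1).dualMap) p.2)

/-- The canonical bilinear form `B_d(x + a*, y + b*) = ⟨x, b*⟩ + ⟨a*, y⟩` on `A ⊕ A*`. -/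
def canonForm {K A : Type*} [Field K] [AddCommGroup A] [Module K A]
    (p q : A × Module.Dual K A) : K :=
  q.2 p.1 + p.2 q.1

/-- For a finite-dimensional left-Alia algebra `(A,[·,·])`, the semi-direct
product `A ⊕ A*` by the coadjoint representation, equipped with the canonical bilinear
form `B_d`, is a quadratic left-Alia algebra; in particular
`B_d([u,v]_d, w) = B_d(u, [w,v]_d − [v,w]_d)`. -/
theorem semidirect_coadjoint_quadratic {K A : Type*} [Field K]
    [AddCommGroup A] [Module K A] [FiniteDimensional K A]
    (br : A →ₗ[K] A →ₗ[K] A) (hA : SymJacobi (fun x y : A => br x y)) :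
    SymJacobi (coadjBracket br) ∧
    (∀ u v : A × Module.Dual K A, canonForm u v = canonForm v u) ∧
    (∀ u : A × Module.Dual K A, (∀ v, canonForm u v = 0) → u = 0) ∧
    (∀ u v w : A × Module.Dual K A,
        canonForm (coadjBracket br u v) w
          = canonForm u (coadjBracket br w v - coadjBracket br v w)) := by
  have key : ∀ (φ : Module.Dual K A) (x y z : A),
      φ (br (br x y) z) + φ (br (br y z) x) + φ (br (br z x) y)
        = φ (br (br y x) z) + φ (br (br z y) x) + φ (br (br x z) y) := by
    intro φ x y z
    simpa [map_add] using congrArg φ (hA x y z)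
  refine ⟨?_, ?_, ?_, ?_⟩
  · intro x y z
    refine Prod.ext (hA x.1 y.1 z.1) ?_
    ext a
    simp only [coadjBracket, LinearMap.add_apply, LinearMap.sub_apply,
      LinearMap.neg_apply, LinearMap.dualMap_apply, LinearMap.flip_apply,
      Prod.fst_add, Prod.snd_add, map_add, map_sub, map_neg]
    linear_combination key z.2 y.1 x.1 a + key x.2 z.1 y.1 a + key y.2 x.1 z.1 a
  · intro u v
    simp [canonForm]; ring
  · intro u hu
    have h1 : u.1 = 0 := by
      rw [← Module.forall_dual_apply_eq_zero_iff K]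
      intro φ
      simpa [canonForm] using hu (0, φ)
    have h2 : u.2 = 0 := by
      ext y
      simpa [canonForm] using hu (y, 0)
    exact Prod.ext h1 h2
  · intro u v w
    simp only [canonForm, coadjBracket, Prod.fst_sub, Prod.snd_sub, map_sub,
      LinearMap.add_apply, LinearMap.sub_apply, LinearMap.neg_apply,
      LinearMap.dualMap_apply, LinearMap.flip_apply]
    ring
end

section
/- Let (A, [·,·]) be a finite-dimensional left-Alia algebra over a field K, with L(x)y = [x,y] = R(y)x. Let B be a nondegenerate bilinear form on A, B^♮ : A → A* the induced isomorphism ⟨B^♮(x), y⟩ = B(x,y), and B̃ ∈ A ⊗ A the element defined by ⟨B̃, a* ⊗ b*⟩ = ⟨(B^♮)^{-1}(a*), b*⟩ for a*, b* ∈ A*. Then (A, [·,·], B) is a quadratic left-Alia algebra if and only if B̃ is symmetric and invariant on (A, [·,·]), i.e. ((R − L)(x) ⊗ id − id ⊗ R(x)) B̃ = 0 for all x ∈ A. -/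
open TensorProduct

section Aux
variable {K A : Type*} [Field K] [AddCommGroup A] [Module K A] [FiniteDimensional K A]

lemma pair_map (f g : Module.Dual K A) (M N : A →ₗ[K] A) (t : A ⊗[K] A) :
    TensorProduct.dualDistrib K A A (f ⊗ₜ[K] g) (TensorProduct.map M N t)
      = TensorProduct.dualDistrib K A A ((f.comp M) ⊗ₜ[K] (g.comp N)) t := by
  induction t using TensorProduct.induction_on with
  | zero => simp
  | tmul a b => simp
  | add x y hx hy => simp [map_add, hx, hy]

lemma pair_comm (f g : Module.Dual K A) (t : A ⊗[K] A) :
    TensorProduct.dualDistrib K A A (f ⊗ₜ[K] g) (TensorProduct.comm K A A t)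
      = TensorProduct.dualDistrib K A A (g ⊗ₜ[K] f) t := by
  induction t using TensorProduct.induction_on with
  | zero => simp
  | tmul a b => simp [mul_comm]
  | add x y hx hy => simp [map_add, hx, hy]

lemma eq_zero_of_pairs {t : A ⊗[K] A}
    (h : ∀ f g : Module.Dual K A, TensorProduct.dualDistrib K A A (f ⊗ₜ[K] g) t = 0) :
    t = 0 := by
  rw [← Module.forall_dual_apply_eq_zero_iff K t]
  intro φ
  obtain ⟨τ, rfl⟩ := (TensorProduct.dualDistribEquiv K A A).surjective φ
  have key : ∀ τ : Module.Dual K A ⊗[K] Module.Dual K A,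
      TensorProduct.dualDistrib K A A τ t = 0 := by
    intro τ
    induction τ using TensorProduct.induction_on with
    | zero => simp
    | tmul f g => exact h f g
    | add x y hx hy => simp [map_add, hx, hy]
  exact key τ

end Aux

/-- Let `(A,[·,·])` be a finite-dimensional left-Alia algebra, `B` a
nondegenerate bilinear form with induced isomorphism `B^♮ : A ≃ A*`, and
`B̃ ∈ A ⊗ A` defined by `⟨B̃, a* ⊗ b*⟩ = ⟨(B^♮)⁻¹(a*), b*⟩`.  Then `(A,[·,·],B)` is a
quadratic left-Alia algebra iff `B̃` is symmetric and invariant, i.e.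
`((R − L)(x) ⊗ id − id ⊗ R(x)) B̃ = 0` for all `x`. -/
theorem quadratic_iff_tensor_invariant {K A : Type*} [Field K]
    [AddCommGroup A] [Module K A] [FiniteDimensional K A]
    (br : A →ₗ[K] A →ₗ[K] A) (hA : SymJacobi (fun x y : A => br x y))
    (B : A →ₗ[K] A →ₗ[K] K)
    (e : A ≃ₗ[K] Module.Dual K A)
    (he : ∀ x : A, (e x : Module.Dual K A) = B x)
    (Bt : A ⊗[K] A)
    (hBt : ∀ f g : Module.Dual K A,
        TensorProduct.dualDistrib K A A (f ⊗ₜ[K] g) Bt = g (e.symm f)) :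
    ((∀ x y : A, B x y = B y x) ∧
     (∀ x y z : A, B (br x y) z = B x (br z y - br y z))) ↔
    (TensorProduct.comm K A A Bt = Bt ∧
     ∀ x : A,
       (TensorProduct.map (br.flip x - br x) (LinearMap.id : A →ₗ[K] A)
         - TensorProduct.map (LinearMap.id : A →ₗ[K] A) (br.flip x)) Bt = 0) := by
  constructor
  · rintro ⟨hsym, hq⟩
    constructor
    · rw [← sub_eq_zero]
      apply eq_zero_of_pairs
      intro f g
      obtain ⟨a, rfl⟩ := e.surjective f
      obtain ⟨b, rfl⟩ := e.surjective g
      rw [map_sub, pair_comm, hBt, hBt, LinearEquiv.symm_apply_apply,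
        LinearEquiv.symm_apply_apply, he, he, hsym a b, sub_self]
    · intro x
      apply eq_zero_of_pairs
      intro f g
      obtain ⟨a, rfl⟩ := e.surjective f
      rw [LinearMap.sub_apply, map_sub, pair_map, pair_map, hBt, hBt]
      have key : (e a).comp (br.flip x - br x) = e (br a x) := by
        ext z
        simp only [LinearMap.comp_apply, LinearMap.sub_apply, LinearMap.flip_apply, he,
          map_sub]
        have := hq a x z
        rw [map_sub] at this
        exact this.symm
      rw [key]
      simp
  · rintro ⟨hc, hi⟩
    have hsym : ∀ x y : A, B x y = B y x := by
      intro x y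
      have h1 : TensorProduct.dualDistrib K A A ((e y) ⊗ₜ[K] (e x)) Bt = B x y := by
        rw [hBt, LinearEquiv.symm_apply_apply, he]
      have h2 : TensorProduct.dualDistrib K A A ((e y) ⊗ₜ[K] (e x))
          (TensorProduct.comm K A A Bt) = B y x := by
        rw [pair_comm, hBt, LinearEquiv.symm_apply_apply, he]
      rw [← h1, ← h2, hc]
    refine ⟨hsym, fun x y z => ?_⟩
    have key : (e x).comp (br.flip y - br y) = e (br x y) := by
      have hw : e.symm ((e x).comp (br.flip y - br y)) = br x y := by
        rw [← sub_eq_zero, ← Module.forall_dual_apply_eq_zero_iff K]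
        intro g
        have h0 := congrArg (TensorProduct.dualDistrib K A A ((e x) ⊗ₜ[K] g)) (hi y)
        rw [LinearMap.sub_apply, map_sub, pair_map, pair_map, hBt, hBt, map_zero] at h0
        simpa using h0
      rw [← hw, LinearEquiv.apply_symm_apply]
    have h3 := congrFun (congrArg (fun (φ : Module.Dual K A) => (φ : A → K)) key) z
    simp only [LinearMap.comp_apply, LinearMap.sub_apply, LinearMap.flip_apply, he] at h3
    rw [← h3]
end
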